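/- Let g₁,…,gₙ : ℝ → ℝ be continuous, β₀ ∈ ℝ, f(x) = step(β₀ + Σᵢgᵢ(xᵢ)) with f(x)=1, and Δᵢ = gᵢ(xᵢ) − min_{|t−xᵢ|≤ε}gᵢ(t), reindexed so Δ₁ ≥ ⋯ ≥ Δₙ. Let k* be the least k such that the prefix {1,…,k} is sufficient for ⟨f,x,ε⟩ (k* exists since {1,…,n} is sufficient). Then {1,…,k*} is a cardinally-minimal sufficient explanation: no sufficient explanation has cardinality less than k*. -/

import Mathlib

/-- The vector equal to `x` on coordinates in `S` and equal to `x̃` on the complement. -/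
def patch {n : ℕ} (S : Finset (Fin n)) (x xt : Fin n → ℝ) : Fin n → ℝ :=
  fun i => if i ∈ S then x i else xt i

/-- `S` is a sufficient explanation for `⟨f, x, ε⟩` w.r.t. the ℓ∞ ball of radius ε. -/
def Sufficient {n : ℕ} (f : (Fin n → ℝ) → Fin 2) (x : Fin n → ℝ) (ε : ℝ)
    (S : Finset (Fin n)) : Prop :=
  ∀ xt : Fin n → ℝ, (∀ i, |x i - xt i| ≤ ε) → f (patch S x xt) = f x

/-- The prefix set `{1,…,k}` of the features (0-indexed: indices `< k`). -/
def prefixSet (n k : ℕ) : Finset (Fin n) :=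
  Finset.univ.filter (fun i : Fin n => (i : ℕ) < k)

/-!
Freeing the features outside `S` lowers the score `β₀ + Σ gᵢ` by at most the total slack
`Σ_{i ∉ S} Δᵢ`, and this worst case is attained at the minimizers of the `gᵢ`; this gives the
sufficiency criterion. Sufficiency of `S` therefore only depends on `Σ_{i ∈ S} Δᵢ`, and since
the `Δᵢ` are sorted decreasingly this sum is, among sets of a given size `k`, largest for the
prefix `{1,…,k}`. So if some sufficient set had fewer than `k*` elements, the prefix of the
same size would be sufficient too, contradicting the minimality of `k*`.
-/

open Finset

lemma Fin.val_le_val_apply_of_strictMono {k n : ℕ} {e : Fin k → Fin n} (he : StrictMono e)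
    (j : Fin k) : (j : ℕ) ≤ e j := by
  obtain ⟨j, hj⟩ := j
  induction j with
  | zero => exact Nat.zero_le _
  | succ i ih =>
    have hlt : e ⟨i, by omega⟩ < e ⟨i + 1, hj⟩ := he (Fin.mk_lt_mk.2 i.lt_succ_self)
    have := ih (by omega)
    rw [Fin.lt_def] at hlt
    exact Nat.succ_le_of_lt (lt_of_le_of_lt this hlt)

lemma prefixSet_eq_map {n k : ℕ} (hk : k ≤ n) :
    prefixSet n k = univ.map (Fin.castLEOrderEmb hk).toEmbedding := by
  ext i
  simp only [prefixSet, mem_filter, mem_univ, true_and, mem_map]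
  refine ⟨fun hik => ⟨⟨i, hik⟩, rfl⟩, ?_⟩
  rintro ⟨j, rfl⟩
  exact j.2

lemma sum_le_sum_prefixSet {M : Type*} [AddCommMonoid M] [PartialOrder M]
    [IsOrderedAddMonoid M] {n : ℕ} {Δ : Fin n → M} (hΔ : Antitone Δ) (S : Finset (Fin n)) :
    ∑ i ∈ S, Δ i ≤ ∑ i ∈ prefixSet n #S, Δ i := by
  have hS : #S ≤ n := by simpa using card_le_univ S
  rw [prefixSet_eq_map hS, sum_map]
  conv_lhs => rw [← map_orderEmbOfFin_univ S rfl, sum_map]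
  refine sum_le_sum fun j _ => hΔ ?_
  exact Fin.val_le_val_apply_of_strictMono (S.orderEmbOfFin rfl).strictMono j

lemma sum_patch {M : Type*} [AddCommMonoid M] {n : ℕ} (g : Fin n → ℝ → M)
    (S : Finset (Fin n)) (x xt : Fin n → ℝ) :
    ∑ i, g i (patch S x xt i) = ∑ i ∈ S, g i (x i) + ∑ i ∈ Sᶜ, g i (xt i) := by
  rw [← sum_add_sum_compl S]
  congr 1
  · exact sum_congr rfl fun i hi => by simp [patch, hi]
  · exact sum_congr rfl fun i hi => by simp [patch, mem_compl.1 hi]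

theorem sufficient_iff_sum_compl_le {n : ℕ} {g : Fin n → ℝ → ℝ} {β₀ ε : ℝ} {x m : Fin n → ℝ}
    {f : (Fin n → ℝ) → Fin 2}
    (hm : ∀ i, IsLeast (g i '' Set.Icc (x i - ε) (x i + ε)) (m i))
    (hf : ∀ y, f y = if 0 ≤ β₀ + ∑ i, g i (y i) then 1 else 0) (hfx : f x = 1)
    (S : Finset (Fin n)) :
    Sufficient f x ε S ↔ ∑ i ∈ Sᶜ, (g i (x i) - m i) ≤ β₀ + ∑ i, g i (x i) := by
  have hworst : ∑ i ∈ Sᶜ, (g i (x i) - m i) ≤ β₀ + ∑ i, g i (x i) ↔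
      0 ≤ β₀ + (∑ i ∈ S, g i (x i) + ∑ i ∈ Sᶜ, m i) := by
    rw [sum_sub_distrib, ← sum_add_sum_compl S (fun i => g i (x i))]
    constructor <;> intro h <;> linarith
  rw [hworst]
  constructor
  · intro hS
    choose t ht hgt using fun i => (hm i).1
    have hball : ∀ i, |x i - t i| ≤ ε := fun i =>
      abs_le.2 ⟨by linarith [(ht i).2], by linarith [(ht i).1]⟩
    have h1 := hS t hball
    rw [hfx, hf, sum_patch, sum_congr rfl fun i _ => hgt i] at h1
    by_contra hneg
    rw [if_neg hneg] at h1
    exact absurd h1 (by decide)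
  · intro h0 xt hxt
    have hle : ∀ i ∈ Sᶜ, m i ≤ g i (xt i) := fun i _ =>
      (hm i).2 ⟨xt i, ⟨by linarith [(abs_le.1 (hxt i)).2], by linarith [(abs_le.1 (hxt i)).1]⟩, rfl⟩
    rw [hfx, hf, sum_patch, if_pos]
    linarith [sum_le_sum hle]

theorem stmt6_general {n : ℕ} (g : Fin n → ℝ → ℝ) (β₀ : ℝ) (x : Fin n → ℝ) (ε : ℝ)
    (m : Fin n → ℝ)
    (hm : ∀ i, IsLeast (g i '' Set.Icc (x i - ε) (x i + ε)) (m i))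
    (f : (Fin n → ℝ) → Fin 2)
    (hf : ∀ y, f y = if 0 ≤ β₀ + ∑ i, g i (y i) then 1 else 0)
    (hfx : f x = 1)
    (hsorted : ∀ i j : Fin n, i ≤ j → g j (x j) - m j ≤ g i (x i) - m i)
    (kstar : ℕ)
    (hmin : ∀ k : ℕ, k < kstar → ¬ Sufficient f x ε (prefixSet n k)) :
    ∀ S' : Finset (Fin n), Sufficient f x ε S' → kstar ≤ S'.card := by
  intro S hS
  by_contra! hlt
  apply hmin _ hlt
  rw [sufficient_iff_sum_compl_le hm hf hfx] at hS ⊢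
  have hprefix := sum_le_sum_prefixSet (Δ := fun i => g i (x i) - m i) hsorted S
  have hS_split := sum_add_sum_compl S (fun i => g i (x i) - m i)
  have hP_split := sum_add_sum_compl (prefixSet n #S) (fun i => g i (x i) - m i)
  linarith

/-- If `k*` is the least `k` such that the top-`k` prefix (features sorted by descending
importance) is sufficient, then `{1,…,k*}` is a cardinally-minimal sufficient explanation:
every sufficient explanation has cardinality at least `k*`. -/
theorem stmt6 {n : ℕ} (g : Fin n → ℝ → ℝ) (β₀ : ℝ) (x : Fin n → ℝ) (ε : ℝ) (hε : 0 < ε)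
    (hg : ∀ i, Continuous (g i)) (m : Fin n → ℝ)
    (hm : ∀ i, IsLeast (g i '' Set.Icc (x i - ε) (x i + ε)) (m i))
    (f : (Fin n → ℝ) → Fin 2)
    (hf : ∀ y, f y = if 0 ≤ β₀ + ∑ i, g i (y i) then 1 else 0)
    (hfx : f x = 1)
    (hsorted : ∀ i j : Fin n, i ≤ j → g j (x j) - m j ≤ g i (x i) - m i)
    (kstar : ℕ) (hk : kstar ≤ n)
    (hsuff : Sufficient f x ε (prefixSet n kstar))
    (hmin : ∀ k : ℕ, k < kstar → ¬ Sufficient f x ε (prefixSet n k)) :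
    ∀ S' : Finset (Fin n), Sufficient f x ε S' → kstar ≤ S'.card :=
  stmt6_general g β₀ x ε m hm f hf hfx hsorted kstar hmin
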